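/- Let F be a field, N, T, n positive integers, and ρ, τ natural numbers. Let X_0,…,X_{n−1} be N×T matrices over F, A_0,…,A_{n−1} be N×N matrices over F with Σ_{j=0}^{n−1} (N − rank A_j) ≤ ρ, and Z_0,…,Z_{n−1} be N×T matrices over F with Σ_{j=0}^{n−1} rank Z_j ≤ τ. If Y_j = A_j X_j + Z_j for each j, then the extended subspace distance between the tuples of row spaces satisfies Σ_{j=0}^{n−1} d_S(⟨X_j⟩, ⟨Y_j⟩) ≤ ρ + 2τ. -/
import Mathlib

/-- The row space of a matrix: the subspace spanned by its rows. -/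
noncomputable def rowSpace {F : Type*} [Field F] {m k : Type*} (X : Matrix m k F) :
    Submodule F (k → F) :=
  Submodule.span F (Set.range X)

/-- The subspace distance `d_S(U,V) = dim(U + V) - dim(U ∩ V)`. -/
noncomputable def subspaceDist {F : Type*} [Field F] {k : Type*}
    (U V : Submodule F (k → F)) : ℕ :=
  Module.finrank F ↥(U ⊔ V) - Module.finrank F ↥(U ⊓ V)

lemma rowSpace_finrank {F : Type*} [Field F] {N T : ℕ} (X : Matrix (Fin N) (Fin T) F) :
    Module.finrank F ↥(rowSpace X) = X.rank :=
  (Matrix.rank_eq_finrank_span_row X).symm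

lemma rowSpace_mul_le {F : Type*} [Field F] {N T : ℕ} (A : Matrix (Fin N) (Fin N) F)
    (X : Matrix (Fin N) (Fin T) F) : rowSpace (A * X) ≤ rowSpace X := by
  rw [rowSpace, Submodule.span_le]
  rintro _ ⟨i, rfl⟩
  have h : (A * X) i = ∑ m, A i m • X m := by
    ext k
    simp [Matrix.mul_apply, Finset.sum_apply]
  rw [h]
  exact Submodule.sum_mem _ fun m _ =>
    Submodule.smul_mem _ _ (Submodule.subset_span ⟨m, rfl⟩)

lemma sylvester {F : Type*} [Field F] {N T : ℕ} (A : Matrix (Fin N) (Fin N) F)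
    (X : Matrix (Fin N) (Fin T) F) : X.rank ≤ (A * X).rank + (N - A.rank) := by
  classical
  set f := A.mulVecLin
  set g := X.mulVecLin
  set U : Submodule F (Fin N → F) := LinearMap.range g
  have hAX : (A * X).rank = Module.finrank F ↥(U.map f) := by
    rw [Matrix.rank, Matrix.mulVecLin_mul, LinearMap.range_comp]
  have h1 : Module.finrank F ↥(LinearMap.range (f.domRestrict U)) +
      Module.finrank F ↥(LinearMap.ker (f.domRestrict U)) = Module.finrank F ↥U :=
    LinearMap.finrank_range_add_finrank_ker _
  have h2 : LinearMap.range (f.domRestrict U) = U.map f := LinearMap.range_domRestrict U f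
  have h3 : Module.finrank F ↥(LinearMap.ker (f.domRestrict U)) ≤
      Module.finrank F ↥(LinearMap.ker f) := by
    rw [LinearMap.ker_domRestrict, ← Submodule.finrank_map_subtype_eq,
      Submodule.map_comap_subtype]
    exact Submodule.finrank_mono inf_le_right
  have h4 : A.rank + Module.finrank F ↥(LinearMap.ker f) = N := by
    have := LinearMap.finrank_range_add_finrank_ker f
    rw [Module.finrank_pi, Fintype.card_fin] at this
    have h6 : A.rank = Module.finrank F ↥(LinearMap.range f) := rfl
    omega
  have h5 : X.rank = Module.finrank F ↥U := rfl
  rw [h2] at h1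
  omega

lemma key_bound {F : Type*} [Field F] {N T : ℕ} (X : Matrix (Fin N) (Fin T) F)
    (A : Matrix (Fin N) (Fin N) F) (Z : Matrix (Fin N) (Fin T) F) :
    subspaceDist (rowSpace X) (rowSpace (A * X + Z)) ≤ (N - A.rank) + 2 * Z.rank := by
  set U := rowSpace X
  set W := rowSpace (A * X)
  set R := rowSpace Z
  set Y := rowSpace (A * X + Z)
  have hWU : W ≤ U := rowSpace_mul_le A X
  have hYWR : Y ≤ W ⊔ R := Submodule.span_le.mpr <| by
    rintro _ ⟨i, rfl⟩
    have h : (A * X + Z) i = (A * X) i + Z i := rfl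
    rw [h]
    exact add_mem (Submodule.mem_sup_left (Submodule.subset_span ⟨i, rfl⟩))
      (Submodule.mem_sup_right (Submodule.subset_span ⟨i, rfl⟩))
  have hWYR : W ≤ Y ⊔ R := Submodule.span_le.mpr <| by
    rintro _ ⟨i, rfl⟩
    have h : (A * X) i = (A * X + Z) i - Z i := eq_sub_iff_add_eq.mpr rfl
    rw [h]
    exact sub_mem (Submodule.mem_sup_left (Submodule.subset_span ⟨i, rfl⟩))
      (Submodule.mem_sup_right (Submodule.subset_span ⟨i, rfl⟩))
  have dU : Module.finrank F ↥U = X.rank := rowSpace_finrank X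
  have dW : Module.finrank F ↥W = (A * X).rank := rowSpace_finrank _
  have dR : Module.finrank F ↥R = Z.rank := rowSpace_finrank Z
  -- dim (U ⊔ Y) ≤ dim U + r
  have hUY : Module.finrank F ↥(U ⊔ Y) ≤ Module.finrank F ↥U + Z.rank := by
    calc Module.finrank F ↥(U ⊔ Y) ≤ Module.finrank F ↥(U ⊔ R) :=
          Submodule.finrank_mono (sup_le le_sup_left (hYWR.trans (sup_le (hWU.trans le_sup_left) le_sup_right)))
      _ ≤ Module.finrank F ↥U + Module.finrank F ↥R := Submodule.finrank_add_le_finrank_add_finrank U R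
      _ = Module.finrank F ↥U + Z.rank := by rw [dR]
  -- dim (W ⊔ Y) ≤ dim Y + r
  have hWY : Module.finrank F ↥(W ⊔ Y) ≤ Module.finrank F ↥Y + Z.rank := by
    calc Module.finrank F ↥(W ⊔ Y) ≤ Module.finrank F ↥(Y ⊔ R) :=
          Submodule.finrank_mono (sup_le hWYR le_sup_left)
      _ ≤ Module.finrank F ↥Y + Module.finrank F ↥R := Submodule.finrank_add_le_finrank_add_finrank Y R
      _ = Module.finrank F ↥Y + Z.rank := by rw [dR]
  have hgrass : Module.finrank F ↥(W ⊔ Y) + Module.finrank F ↥(W ⊓ Y) =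
      Module.finrank F ↥W + Module.finrank F ↥Y := Submodule.finrank_sup_add_finrank_inf_eq W Y
  have hinf : Module.finrank F ↥(W ⊓ Y) ≤ Module.finrank F ↥(U ⊓ Y) :=
    Submodule.finrank_mono (inf_le_inf_right Y hWU)
  have hsyl : X.rank ≤ (A * X).rank + (N - A.rank) := sylvester A X
  rw [subspaceDist]
  omega

/-- If `Y_j = A_j X_j + Z_j` with `Σ (N - rank A_j) ≤ ρ` and `Σ rank Z_j ≤ τ`, then
the extended subspace distance satisfies `Σ d_S(⟨X_j⟩, ⟨Y_j⟩) ≤ ρ + 2τ`. -/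
theorem extended_subspaceDist_channel_le
    {F : Type*} [Field F] (N T n : ℕ) (hN : 0 < N) (hT : 0 < T) (hn : 0 < n)
    (ρ τ : ℕ)
    (X : Fin n → Matrix (Fin N) (Fin T) F)
    (A : Fin n → Matrix (Fin N) (Fin N) F)
    (hA : ∑ j : Fin n, (N - (A j).rank) ≤ ρ)
    (Z : Fin n → Matrix (Fin N) (Fin T) F)
    (hZ : ∑ j : Fin n, (Z j).rank ≤ τ)
    (Y : Fin n → Matrix (Fin N) (Fin T) F)
    (hY : ∀ j : Fin n, Y j = A j * X j + Z j) :
    ∑ j : Fin n, subspaceDist (rowSpace (X j)) (rowSpace (Y j)) ≤ ρ + 2 * τ := by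
  calc ∑ j : Fin n, subspaceDist (rowSpace (X j)) (rowSpace (Y j))
      ≤ ∑ j : Fin n, ((N - (A j).rank) + 2 * (Z j).rank) :=
        Finset.sum_le_sum fun j _ => by rw [hY j]; exact key_bound (X j) (A j) (Z j)
    _ = (∑ j : Fin n, (N - (A j).rank)) + 2 * ∑ j : Fin n, (Z j).rank := by
        rw [Finset.sum_add_distrib, Finset.mul_sum]
    _ ≤ ρ + 2 * τ := add_le_add hA (Nat.mul_le_mul_left 2 hZ)
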